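/- arXiv:0807.3490 — 4 statements merged into one kernel-verified Lean document; each statement's English description precedes it below -/
import Mathlib

section
/- Let A be an n×n complex matrix whose Hermitian part Re(A) = (A + A^H)/2 is positive definite, let P be an n×n Hermitian positive definite matrix, and let α > 0. Define the PHSS iteration matrix M(α) = (αP + i·Im(A))^{-1}(αP − Re(A))(αP + Re(A))^{-1}(αP − i·Im(A)). Then every eigenvalue μ of M(α) (i.e., every element of the spectrum of M(α) over ℂ) satisfies |μ| ≤ σ(α) := max over the eigenvalues λ of the Hermitian positive definite matrix P^{-1/2} Re(A) P^{-1/2} of |(α − λ)/(α + λ)|, and σ(α) < 1. -/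
/-!
With `Q = P^{-1/2}`, `B = Q Re(A) Q` and `T = Q (i Im(A)) Q`, the congruences
`αP ± X = Q⁻¹ (α ± Q X Q) Q⁻¹` show that `M(α)` is similar to `(α - B)(α + B)⁻¹ (α - T)(α + T)⁻¹`.
The second factor is the Cayley transform of the skew-Hermitian `T`, hence unitary, and the first
is diagonalised by the eigenvectors of `B`. So the L2 operator norm of the product, which bounds
every eigenvalue, is at most `max_λ |(α - λ)/(α + λ)|`, and this is `< 1` because `B` is positive
definite.
-/

open Matrix
open scoped ComplexOrder Matrix.Norms.L2Operator

lemma iSup_abs_sub_div_add_lt_one {ι : Type*} [Finite ι] {c : ℝ} (hc : 0 < c) {l : ι → ℝ}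
    (hl : ∀ i, 0 < l i) : ⨆ i, |(c - l i) / (c + l i)| < 1 := by
  rcases isEmpty_or_nonempty ι with hι | hι
  · simp
  · obtain ⟨i, hi⟩ := exists_eq_ciSup_of_finite (f := fun i => |(c - l i) / (c + l i)|)
    have hpos : 0 < c + l i := add_pos hc (hl i)
    have hli := hl i
    rw [← hi, abs_div, abs_of_pos hpos, div_lt_one hpos, abs_lt]
    constructor <;> linarith

namespace Matrix

section Similarity

variable {ι R : Type*} [Fintype ι] [DecidableEq ι] [CommRing R]

lemma spectrum_mul_mul_nonsing_inv {Q : Matrix ι ι R} (hQ : IsUnit Q) (X : Matrix ι ι R) :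
    spectrum R (Q * X * Q⁻¹) = spectrum R X := by
  obtain ⟨u, rfl⟩ := hQ
  rw [← coe_units_inv]
  exact spectrum.units_conjugate

lemma spectrum_nonsing_inv_mul_comm {D : Matrix ι ι R} (hD : IsUnit D) (X : Matrix ι ι R) :
    spectrum R (D⁻¹ * X) = spectrum R (X * D⁻¹) := by
  have hd : IsUnit D.det := (isUnit_iff_isUnit_det D).mp hD
  rw [← spectrum_mul_mul_nonsing_inv (isUnit_nonsing_inv_iff.mpr hD) (X * D⁻¹),
    nonsing_inv_nonsing_inv _ hd, mul_assoc, mul_assoc, nonsing_inv_mul _ hd, mul_one]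

end Similarity

variable {ι 𝕜 : Type*} [DecidableEq ι] [RCLike 𝕜]

lemma conjTranspose_smul_one_add_of_conjTranspose_eq_neg {T : Matrix ι ι 𝕜} (hT : Tᴴ = -T)
    (α : ℝ) : ((α : 𝕜) • 1 + T)ᴴ = (α : 𝕜) • 1 - T := by
  simp [hT, sub_eq_add_neg]

variable [Fintype ι]

lemma isUnit_of_posDef_add_conjTranspose {X : Matrix ι ι 𝕜} (h : (X + Xᴴ).PosDef) :
    IsUnit X := by
  rw [isUnit_iff_isUnit_det, isUnit_iff_ne_zero]
  intro hdet
  obtain ⟨v, hv, hXv⟩ := exists_mulVec_eq_zero_iff.mpr hdet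
  have hpos := h.dotProduct_mulVec_pos hv
  rw [add_mulVec, dotProduct_add, dotProduct_mulVec (star v) Xᴴ, ← star_mulVec, hXv] at hpos
  simp at hpos

lemma isUnit_smul_one_add_of_conjTranspose_eq_neg {T : Matrix ι ι 𝕜} (hT : Tᴴ = -T)
    {α : ℝ} (hα : 0 < α) : IsUnit ((α : 𝕜) • 1 + T) := by
  have hα' : (0 : 𝕜) < α := RCLike.ofReal_pos.mpr hα
  refine isUnit_of_posDef_add_conjTranspose ?_
  rw [conjTranspose_smul_one_add_of_conjTranspose_eq_neg hT, add_add_sub_cancel, ← add_smul]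
  exact PosDef.one.smul (add_pos hα' hα')

lemma conjTranspose_mul_inv_mem_unitaryGroup {X : Matrix ι ι 𝕜} (hX : IsUnit X)
    (hXX : Xᴴ * X = X * Xᴴ) : Xᴴ * X⁻¹ ∈ unitaryGroup ι 𝕜 := by
  have hd : IsUnit X.det := (isUnit_iff_isUnit_det X).mp hX
  have hd' : IsUnit Xᴴ.det := by rwa [det_conjTranspose, isUnit_star]
  rw [mem_unitaryGroup_iff', star_eq_conjTranspose, conjTranspose_mul, conjTranspose_nonsing_inv,
    conjTranspose_conjTranspose]
  calc (Xᴴ)⁻¹ * X * (Xᴴ * X⁻¹) = (Xᴴ)⁻¹ * (X * Xᴴ) * X⁻¹ := by simp only [mul_assoc]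
    _ = 1 := by
      rw [← hXX, mul_assoc, mul_assoc, nonsing_inv_mul_cancel_left _ _ hd', mul_nonsing_inv _ hd]

lemma smul_one_sub_mul_add_inv_mem_unitaryGroup {T : Matrix ι ι 𝕜} (hT : Tᴴ = -T) {α : ℝ}
    (hα : 0 < α) :
    ((α : 𝕜) • 1 - T) * ((α : 𝕜) • 1 + T)⁻¹ ∈ unitaryGroup ι 𝕜 := by
  have hX := conjTranspose_smul_one_add_of_conjTranspose_eq_neg hT α
  rw [← hX]
  refine conjTranspose_mul_inv_mem_unitaryGroup
    (isUnit_smul_one_add_of_conjTranspose_eq_neg hT hα) ?_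
  rw [hX]
  simp only [mul_sub, sub_mul, mul_add, add_mul, smul_mul_assoc, mul_smul_comm, one_mul, mul_one,
    smul_add, smul_sub]
  abel

lemma PosDef.mul_mul_same_of_isHermitian {H Q : Matrix ι ι 𝕜} (hH : H.PosDef)
    (hQ : Q.IsHermitian) (hQu : IsUnit Q) : (Q * H * Q).PosDef := by
  simpa [star_eq_conjTranspose, hQ.eq] using hQu.posDef_star_left_conjugate_iff.mpr hH

lemma nonsing_inv_unitary_conj {U : Matrix ι ι 𝕜} (hU : U ∈ unitaryGroup ι 𝕜)
    (X : Matrix ι ι 𝕜) :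
    (U * X * star U)⁻¹ = U * X⁻¹ * star U := by
  have hUinv : U⁻¹ = star U := inv_eq_left_inv (Unitary.star_mul_self_of_mem hU)
  have hUsinv : (star U)⁻¹ = U := inv_eq_left_inv (Unitary.mul_star_self_of_mem hU)
  rw [mul_inv_rev, mul_inv_rev, hUinv, hUsinv, mul_assoc]

lemma smul_one_sub_mul_add_inv_diagonal {c : 𝕜} {d : ι → 𝕜} (hd : ∀ i, c + d i ≠ 0) :
    (c • 1 - diagonal d) * (c • 1 + diagonal d)⁻¹ = diagonal fun i => (c - d i) / (c + d i) := by
  have hinv : (c • 1 + diagonal d)⁻¹ = diagonal fun i => (c + d i)⁻¹ := by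
    refine inv_eq_left_inv ?_
    rw [smul_one_eq_diagonal, diagonal_add, diagonal_mul_diagonal]
    simp [inv_mul_cancel₀ (hd _)]
  rw [hinv, smul_one_eq_diagonal, diagonal_sub, diagonal_mul_diagonal]
  simp only [div_eq_mul_inv]

lemma IsHermitian.smul_one_sub_mul_add_inv_eq {B : Matrix ι ι 𝕜} (hB : B.IsHermitian) {α : ℝ}
    (hα : ∀ i, α + hB.eigenvalues i ≠ 0) :
    ((α : 𝕜) • 1 - B) * ((α : 𝕜) • 1 + B)⁻¹ =
      Unitary.conjStarAlgAut 𝕜 _ hB.eigenvectorUnitary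
        (diagonal fun i => (((α - hB.eigenvalues i) / (α + hB.eigenvalues i) : ℝ) : 𝕜)) := by
  set φ := Unitary.conjStarAlgAut 𝕜 _ hB.eigenvectorUnitary
  have hφ : ∀ X, (φ X)⁻¹ = φ X⁻¹ := nonsing_inv_unitary_conj hB.eigenvectorUnitary.2
  have hd : ∀ i, (α : 𝕜) + (RCLike.ofReal ∘ hB.eigenvalues) i ≠ 0 := fun i => by
    simpa using (RCLike.ofReal_ne_zero (K := 𝕜)).mpr (hα i)
  conv_lhs => rw [hB.spectral_theorem]
  rw [← map_one φ, ← map_smul, ← map_sub, ← map_add, hφ, ← map_mul,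
    smul_one_sub_mul_add_inv_diagonal hd]
  simp

lemma IsHermitian.norm_smul_one_sub_mul_add_inv_le {B : Matrix ι ι 𝕜} (hB : B.IsHermitian)
    {α : ℝ} (hα : ∀ i, α + hB.eigenvalues i ≠ 0) :
    ‖((α : 𝕜) • 1 - B) * ((α : 𝕜) • 1 + B)⁻¹‖ ≤
      ⨆ i, |(α - hB.eigenvalues i) / (α + hB.eigenvalues i)| := by
  have hbdd :=
    (Set.finite_range fun i => |(α - hB.eigenvalues i) / (α + hB.eigenvalues i)|).bddAbove
  rw [hB.smul_one_sub_mul_add_inv_eq hα, Unitary.conjStarAlgAut_apply, ← Unitary.coe_star,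
    CStarRing.norm_mul_coe_unitary, CStarRing.norm_coe_unitary_mul, l2_opNorm_diagonal,
    pi_norm_le_iff_of_nonneg (Real.iSup_nonneg fun _ => abs_nonneg _)]
  intro i
  rw [RCLike.norm_ofReal]
  exact le_ciSup hbdd i

end Matrix

section PHSS

variable {ι 𝕜 : Type*} [Fintype ι] [DecidableEq ι] [RCLike 𝕜]

noncomputable def phssIterationMatrix (α : ℝ) (P H S : Matrix ι ι 𝕜) : Matrix ι ι 𝕜 :=
  ((α : 𝕜) • P + S)⁻¹ * ((α : 𝕜) • P - H) * ((α : 𝕜) • P + H)⁻¹ * ((α : 𝕜) • P - S)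

lemma phssIterationMatrix_eq_conj {P Q : Matrix ι ι 𝕜} (hQ : IsUnit Q) (hQ2 : Q * Q = P⁻¹)
    (α : ℝ) (H S : Matrix ι ι 𝕜) :
    phssIterationMatrix α P H S =
      Q * (((α : 𝕜) • 1 + Q * S * Q)⁻¹ * (((α : 𝕜) • 1 - Q * H * Q) *
        ((α : 𝕜) • 1 + Q * H * Q)⁻¹ * ((α : 𝕜) • 1 - Q * S * Q))) * Q⁻¹ := by
  have hd : IsUnit Q.det := (isUnit_iff_isUnit_det Q).mp hQ
  have hPd : IsUnit P.det := by
    rw [← isUnit_nonsing_inv_det_iff, ← hQ2, det_mul]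
    exact hd.mul hd
  have hP : P = Q⁻¹ * Q⁻¹ := by rw [← Matrix.mul_inv_rev, hQ2, nonsing_inv_nonsing_inv _ hPd]
  have hconj : ∀ X : Matrix ι ι 𝕜, Q⁻¹ * (Q * X * Q) * Q⁻¹ = X := fun X => by
    simp only [← mul_assoc, nonsing_inv_mul _ hd, one_mul, mul_nonsing_inv_cancel_right _ _ hd]
  have hadd : ∀ X, (α : 𝕜) • P + X = Q⁻¹ * ((α : 𝕜) • 1 + Q * X * Q) * Q⁻¹ := fun X => by
    rw [mul_add, add_mul, hconj, Matrix.mul_smul, mul_one, Matrix.smul_mul, hP]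
  have hsub : ∀ X, (α : 𝕜) • P - X = Q⁻¹ * ((α : 𝕜) • 1 - Q * X * Q) * Q⁻¹ := fun X => by
    rw [mul_sub, sub_mul, hconj, Matrix.mul_smul, mul_one, Matrix.smul_mul, hP]
  rw [phssIterationMatrix, hadd S, hsub H, hadd H, hsub S]
  simp only [Matrix.mul_inv_rev, nonsing_inv_nonsing_inv _ hd, mul_assoc,
    nonsing_inv_mul_cancel_left _ _ hd, mul_nonsing_inv_cancel_left _ _ hd]

lemma spectrum_phssIterationMatrix {P Q : Matrix ι ι 𝕜} (hQ : IsUnit Q) (hQ2 : Q * Q = P⁻¹)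
    {α : ℝ} (H S : Matrix ι ι 𝕜) (hS : IsUnit ((α : 𝕜) • 1 + Q * S * Q)) :
    spectrum 𝕜 (phssIterationMatrix α P H S) =
      spectrum 𝕜 (((α : 𝕜) • 1 - Q * H * Q) * ((α : 𝕜) • 1 + Q * H * Q)⁻¹ *
        (((α : 𝕜) • 1 - Q * S * Q) * ((α : 𝕜) • 1 + Q * S * Q)⁻¹)) := by
  rw [phssIterationMatrix_eq_conj hQ hQ2, spectrum_mul_mul_nonsing_inv hQ,
    spectrum_nonsing_inv_mul_comm hS]
  simp only [mul_assoc]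

theorem norm_le_of_mem_spectrum_phssIterationMatrix {P Q H S : Matrix ι ι 𝕜} (hH : H.PosDef)
    (hS : Sᴴ = -S) (hQ : Q.PosDef) (hQ2 : Q * Q = P⁻¹) {α : ℝ} (hα : 0 < α)
    (hB : (Q * H * Q).IsHermitian) {μ : 𝕜} (hμ : μ ∈ spectrum 𝕜 (phssIterationMatrix α P H S)) :
    ‖μ‖ ≤ ⨆ i, |(α - hB.eigenvalues i) / (α + hB.eigenvalues i)| := by
  have hBpos := hH.mul_mul_same_of_isHermitian hQ.isHermitian hQ.isUnit
  have hT : (Q * S * Q)ᴴ = -(Q * S * Q) := by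
    simp [conjTranspose_mul, hS, hQ.isHermitian.eq, mul_assoc]
  rw [spectrum_phssIterationMatrix hQ.isUnit hQ2 H S
    (isUnit_smul_one_add_of_conjTranspose_eq_neg hT hα)] at hμ
  -- `‖1‖ = 0` for empty `ι`, so there is no `NormOneClass` instance to use here.
  have hone : ‖(1 : Matrix ι ι 𝕜)‖ ≤ 1 := by
    rw [← diagonal_one, l2_opNorm_diagonal]
    exact (pi_norm_le_iff_of_nonneg zero_le_one).mpr fun _ => by simp
  calc ‖μ‖ ≤ ‖_‖ * ‖(1 : Matrix ι ι 𝕜)‖ := spectrum.norm_le_norm_mul_of_mem hμ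
    _ ≤ ‖((α : 𝕜) • 1 - Q * H * Q) * ((α : 𝕜) • 1 + Q * H * Q)⁻¹ *
        (((α : 𝕜) • 1 - Q * S * Q) * ((α : 𝕜) • 1 + Q * S * Q)⁻¹)‖ :=
      mul_le_of_le_one_right (norm_nonneg _) hone
    _ = ‖((α : 𝕜) • 1 - Q * H * Q) * ((α : 𝕜) • 1 + Q * H * Q)⁻¹‖ :=
      CStarRing.norm_mul_mem_unitary _ (smul_one_sub_mul_add_inv_mem_unitaryGroup hT hα)
    _ ≤ _ := hB.norm_smul_one_sub_mul_add_inv_le fun i =>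
      (add_pos hα (hBpos.eigenvalues_pos i)).ne'

end PHSS

theorem stmt_3_general {n : ℕ} (A P Q : Matrix (Fin n) (Fin n) ℂ)
    (hRe : ((1 / 2 : ℂ) • (A + Aᴴ)).PosDef)
    (α : ℝ) (hα : 0 < α)
    (hQ : Q.PosDef) (hQ2 : Q * Q = P⁻¹)
    (hB : (Q * ((1 / 2 : ℂ) • (A + Aᴴ)) * Q).IsHermitian) :
    (∀ μ ∈ spectrum ℂ
        (((α : ℂ) • P + Complex.I • ((1 / (2 * Complex.I) : ℂ) • (A - Aᴴ)))⁻¹ *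
          ((α : ℂ) • P - (1 / 2 : ℂ) • (A + Aᴴ)) *
          ((α : ℂ) • P + (1 / 2 : ℂ) • (A + Aᴴ))⁻¹ *
          ((α : ℂ) • P - Complex.I • ((1 / (2 * Complex.I) : ℂ) • (A - Aᴴ)))),
        ‖μ‖ ≤ ⨆ i : Fin n, |(α - hB.eigenvalues i) / (α + hB.eigenvalues i)|) ∧
      (⨆ i : Fin n, |(α - hB.eigenvalues i) / (α + hB.eigenvalues i)|) < 1 := by
  have hIm : Complex.I • ((1 / (2 * Complex.I) : ℂ) • (A - Aᴴ)) = (1 / 2 : ℂ) • (A - Aᴴ) := by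
    rw [smul_smul]
    field_simp
  have hS : ((1 / 2 : ℂ) • (A - Aᴴ))ᴴ = -((1 / 2 : ℂ) • (A - Aᴴ)) := by
    rw [conjTranspose_smul, conjTranspose_sub, conjTranspose_conjTranspose, ← smul_neg, neg_sub]
    simp
  have hBpos := hRe.mul_mul_same_of_isHermitian hQ.isHermitian hQ.isUnit
  refine ⟨fun μ hμ => ?_, iSup_abs_sub_div_add_lt_one hα hBpos.eigenvalues_pos⟩
  rw [hIm] at hμ
  exact norm_le_of_mem_spectrum_phssIterationMatrix hRe hS hQ hQ2 hα hB hμ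

/-- Spectral radius bound for the PHSS iteration matrix
`M(α) = (αP + i Im A)⁻¹ (αP - Re A)(αP + Re A)⁻¹ (αP - i Im A)`: every eigenvalue `μ` of
`M(α)` satisfies `|μ| ≤ σ(α) := max_{λ ∈ λ(P^{-1/2} Re(A) P^{-1/2})} |(α-λ)/(α+λ)| < 1`.
Here `Q` plays the role of `P^{-1/2}`, i.e. `Q` is Hermitian positive definite with
`Q * Q = P⁻¹`, and `hB` records that `Q * Re(A) * Q` is Hermitian (which is automatic). -/
theorem stmt_3 {n : ℕ} (hn : 0 < n) (A P Q : Matrix (Fin n) (Fin n) ℂ)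
    (hRe : ((1 / 2 : ℂ) • (A + Aᴴ)).PosDef) (hP : P.PosDef)
    (α : ℝ) (hα : 0 < α)
    (hQ : Q.PosDef) (hQ2 : Q * Q = P⁻¹)
    (hB : (Q * ((1 / 2 : ℂ) • (A + Aᴴ)) * Q).IsHermitian) :
    (∀ μ ∈ spectrum ℂ
        (((α : ℂ) • P + Complex.I • ((1 / (2 * Complex.I) : ℂ) • (A - Aᴴ)))⁻¹ *
          ((α : ℂ) • P - (1 / 2 : ℂ) • (A + Aᴴ)) *
          ((α : ℂ) • P + (1 / 2 : ℂ) • (A + Aᴴ))⁻¹ *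
          ((α : ℂ) • P - Complex.I • ((1 / (2 * Complex.I) : ℂ) • (A - Aᴴ)))),
        ‖μ‖ ≤ ⨆ i : Fin n, |(α - hB.eigenvalues i) / (α + hB.eigenvalues i)|) ∧
      (⨆ i : Fin n, |(α - hB.eigenvalues i) / (α + hB.eigenvalues i)|) < 1 :=
  stmt_3_general A P Q hRe α hα hQ hQ2 hB
end

section
/- Let A be an n×n complex matrix whose Hermitian part Re(A) = (A + A^H)/2 is positive definite, let P be an n×n Hermitian positive definite matrix, let α > 0, and let b ∈ ℂ^n. For any initial guess x^0 ∈ ℂ^n, define the PHSS sequence by (αP + Re(A))x^{k+1/2} = (αP − i·Im(A))x^k + b and (αP + i·Im(A))x^{k+1} = (αP − Re(A))x^{k+1/2} + b. Then the sequence (x^k) converges to the unique solution x* of Ax = b. -/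
/-!
Write `H = Re(A)`, `K = i·Im(A) = A - H` (skew-Hermitian) and `P' = αP`, and let `e k = x k - x*`,
`ê k = xh k - x*`. For `M` Hermitian invertible and any `B`, the `M⁻¹`-norms satisfy
`‖(M + B) y‖² = ‖(M - B) y‖² + 2 Re y*(B + B*)y`. Applied with `B = H` and `B = K` along the two
half-steps, the energy `V k = ‖(P' - K) e k‖²` (in the `P'⁻¹`-norm) satisfies
`V k = V (k + 1) + 4 Re (ê k)* H (ê k)`. So these quadratic forms are summable and tend to zero,
hence `ê k → 0` as `H` is positive definite, and `e (k + 1) = (P' + K)⁻¹ (P' - H) ê k → 0`.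
The solution is unique because the same sequence converges to every solution.
-/

open Matrix Filter Topology
open scoped ComplexOrder

namespace Matrix

variable {n 𝕜 : Type*} [Fintype n] [RCLike 𝕜]

theorem star_mulVec_dotProduct_mulVec (X Y : Matrix n n 𝕜) (v : n → 𝕜) :
    star (X *ᵥ v) ⬝ᵥ (Y *ᵥ v) = star v ⬝ᵥ ((Xᴴ * Y) *ᵥ v) := by
  rw [star_mulVec, ← dotProduct_mulVec, mulVec_mulVec]

theorem tendsto_zero_of_tendsto_re_star_dotProduct_self {ι : Type*} {l : Filter ι}
    {w : ι → n → 𝕜} (h : Tendsto (fun i => RCLike.re (star (w i) ⬝ᵥ w i)) l (𝓝 0)) :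
    Tendsto w l (𝓝 0) := by
  have hnorm (i : ι) : ‖WithLp.toLp 2 (w i)‖ = √(RCLike.re (star (w i) ⬝ᵥ w i)) := by
    rw [← Real.sqrt_sq (norm_nonneg _), ← inner_self_eq_norm_sq (𝕜 := 𝕜),
      EuclideanSpace.inner_eq_star_dotProduct, dotProduct_comm]
  have hE : Tendsto (fun i => WithLp.toLp 2 (w i)) l (𝓝 0) := by
    rw [tendsto_zero_iff_norm_tendsto_zero]
    simpa [hnorm] using h.sqrt
  simpa [Function.comp_def] using ((PiLp.continuous_ofLp 2 fun _ : n => 𝕜).tendsto 0).comp hE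

variable [DecidableEq n]

open scoped MatrixOrder in
theorem PosDef.tendsto_zero_of_tendsto_re_dotProduct {ι : Type*} {l : Filter ι}
    {H : Matrix n n 𝕜} (hH : H.PosDef) {v : ι → n → 𝕜}
    (h : Tendsto (fun i => RCLike.re (star (v i) ⬝ᵥ (H *ᵥ v i))) l (𝓝 0)) :
    Tendsto v l (𝓝 0) := by
  obtain ⟨B, rfl⟩ := CStarAlgebra.nonneg_iff_eq_star_mul_self.mp hH.posSemidef.nonneg
  have hB : IsUnit B := by
    refine mulVec_injective_iff_isUnit.mp (Function.Injective.of_comp (f := (star B).mulVec) ?_)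
    simpa only [Function.comp_def, mulVec_mulVec] using mulVec_injective_iff_isUnit.mpr hH.isUnit
  have hBv : Tendsto (fun i => B *ᵥ v i) l (𝓝 0) := by
    refine tendsto_zero_of_tendsto_re_star_dotProduct_self ?_
    simpa only [star_mulVec_dotProduct_mulVec, star_eq_conjTranspose] using h
  have hlim := ((continuous_const (y := B⁻¹)).matrix_mulVec continuous_id |>.tendsto 0).comp hBv
  simpa [Function.comp_def, mulVec_mulVec, nonsing_inv_mul _ ((isUnit_iff_isUnit_det B).mp hB)]
    using hlim

theorem isUnit_of_posDef_add_conjTranspose_s4 {M : Matrix n n 𝕜} (hM : (M + Mᴴ).PosDef) :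
    IsUnit M := by
  refine mulVec_injective_iff_isUnit.mp fun u v huv => ?_
  by_contra hne
  have hMw : M *ᵥ (u - v) = 0 := by rw [mulVec_sub, huv, sub_self]
  have hpos := hM.dotProduct_mulVec_pos (sub_ne_zero.mpr hne)
  rw [add_mulVec, dotProduct_add, dotProduct_mulVec _ Mᴴ, ← star_mulVec, hMw] at hpos
  simp at hpos

theorem star_mulVec_dotProduct_add_sub {M W : Matrix n n 𝕜} (hM : Mᴴ = M) (hWM : W * M = 1)
    (hMW : M * W = 1) (B : Matrix n n 𝕜) (y : n → 𝕜) :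
    star ((M + B) *ᵥ y) ⬝ᵥ (W *ᵥ ((M + B) *ᵥ y)) =
      star ((M - B) *ᵥ y) ⬝ᵥ (W *ᵥ ((M - B) *ᵥ y)) + 2 * (star y ⬝ᵥ ((B + Bᴴ) *ᵥ y)) := by
  have hMW' (X : Matrix n n 𝕜) : M * (W * X) = X := by rw [← Matrix.mul_assoc, hMW, one_mul]
  have hmat : (M + B)ᴴ * (W * (M + B)) = (M - B)ᴴ * (W * (M - B)) + (2 : 𝕜) • (B + Bᴴ) := by
    simp only [conjTranspose_add, conjTranspose_sub, hM, add_mul, mul_add, sub_mul, mul_sub,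
      hWM, hMW', mul_one]
    module
  rw [mulVec_mulVec, mulVec_mulVec, star_mulVec_dotProduct_mulVec, star_mulVec_dotProduct_mulVec,
    hmat, add_mulVec, dotProduct_add, smul_mulVec, dotProduct_smul, smul_eq_mul]

section PHSS

variable {P H K : Matrix n n 𝕜}

theorem phss_energy_step (hP : P.PosDef) (hH : Hᴴ = H) (hK : Kᴴ = -K) {e eh e' : n → 𝕜}
    (h₁ : (P + H) *ᵥ eh = (P - K) *ᵥ e) (h₂ : (P + K) *ᵥ e' = (P - H) *ᵥ eh) :
    RCLike.re (star ((P - K) *ᵥ e) ⬝ᵥ (P⁻¹ *ᵥ ((P - K) *ᵥ e))) =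
      RCLike.re (star ((P - K) *ᵥ e') ⬝ᵥ (P⁻¹ *ᵥ ((P - K) *ᵥ e'))) +
        4 * RCLike.re (star eh ⬝ᵥ (H *ᵥ eh)) := by
  have hdet := (isUnit_iff_isUnit_det P).mp hP.isUnit
  have key := star_mulVec_dotProduct_add_sub hP.isHermitian.eq (nonsing_inv_mul P hdet)
    (mul_nonsing_inv P hdet)
  rw [← h₁, key H, ← h₂, key K, hH, hK, add_neg_cancel, zero_mulVec, dotProduct_zero, mul_zero,
    add_zero, add_mulVec, dotProduct_add, ← two_mul, ← mul_assoc, map_add]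
  norm_num

theorem tendsto_phss_error_zero (hP : P.PosDef) (hH : H.PosDef) (hK : Kᴴ = -K)
    {e eh : ℕ → n → 𝕜} (h₁ : ∀ k, (P + H) *ᵥ eh k = (P - K) *ᵥ e k)
    (h₂ : ∀ k, (P + K) *ᵥ e (k + 1) = (P - H) *ᵥ eh k) :
    Tendsto e atTop (𝓝 0) := by
  set V : ℕ → ℝ := fun k => RCLike.re (star ((P - K) *ᵥ e k) ⬝ᵥ (P⁻¹ *ᵥ ((P - K) *ᵥ e k)))
  set q : ℕ → ℝ := fun k => RCLike.re (star (eh k) ⬝ᵥ (H *ᵥ eh k))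
  have hstep (k : ℕ) : V k = V (k + 1) + 4 * q k :=
    phss_energy_step hP hH.isHermitian.eq hK (h₁ k) (h₂ k)
  have hV_nonneg (k : ℕ) : 0 ≤ V k := hP.inv.posSemidef.re_dotProduct_nonneg _
  have hq_summable : Summable q := by
    refine summable_of_sum_range_le (c := V 0 / 4)
      (fun k => hH.posSemidef.re_dotProduct_nonneg _) fun N => ?_
    have htelescope : 4 * ∑ i ∈ Finset.range N, q i = V 0 - V N := by
      rw [Finset.mul_sum, ← Finset.sum_range_sub']
      exact Finset.sum_congr rfl fun i _ => by rw [hstep i]; ring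
    linarith [hV_nonneg N]
  have heh : Tendsto eh atTop (𝓝 0) :=
    hH.tendsto_zero_of_tendsto_re_dotProduct hq_summable.tendsto_atTop_zero
  have hPK : IsUnit (P + K) := by
    refine isUnit_of_posDef_add_conjTranspose_s4 ?_
    convert hP.add hP using 1
    rw [conjTranspose_add, hP.isHermitian.eq, hK]
    abel
  have he (k : ℕ) : e (k + 1) = (P + K)⁻¹ *ᵥ ((P - H) *ᵥ eh k) := by
    rw [← h₂, mulVec_mulVec, nonsing_inv_mul _ ((isUnit_iff_isUnit_det _).mp hPK), one_mulVec]
  have hlim := ((continuous_const (y := (P + K)⁻¹ * (P - H))).matrix_mulVec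
    continuous_id |>.tendsto 0).comp heh
  refine (tendsto_add_atTop_iff_nat 1).mp ?_
  simpa [he, Function.comp_def, mulVec_mulVec] using hlim

theorem tendsto_phss (hP : P.PosDef) (hH : H.PosDef) (hK : Kᴴ = -K)
    {b xstar : n → 𝕜} (hstar : (H + K) *ᵥ xstar = b) {x xh : ℕ → n → 𝕜}
    (hhalf : ∀ k, (P + H) *ᵥ xh k = (P - K) *ᵥ x k + b)
    (hfull : ∀ k, (P + K) *ᵥ x (k + 1) = (P - H) *ᵥ xh k + b) :
    Tendsto x atTop (𝓝 xstar) := by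
  have hfix₁ : (P + H) *ᵥ xstar = (P - K) *ᵥ xstar + b := by
    rw [← hstar]; simp only [add_mulVec, sub_mulVec]; abel
  have hfix₂ : (P + K) *ᵥ xstar = (P - H) *ᵥ xstar + b := by
    rw [← hstar]; simp only [add_mulVec, sub_mulVec]; abel
  refine tendsto_sub_nhds_zero_iff.mp <| tendsto_phss_error_zero hP hH hK
    (eh := fun k => xh k - xstar) (fun k => ?_) fun k => ?_
  · rw [mulVec_sub, mulVec_sub, hhalf, hfix₁, add_sub_add_right_eq_sub]
  · rw [mulVec_sub, mulVec_sub, hfull, hfix₂, add_sub_add_right_eq_sub]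

end PHSS

end Matrix

/-- Unconditional convergence of the PHSS iteration: if `Re(A)` is positive definite, `P` is
Hermitian positive definite, `α > 0`, and the sequence `(x^k)` is produced by the two PHSS
half-steps, then `(x^k)` converges to the unique solution `x*` of `A x = b`. -/
theorem stmt_4 {n : ℕ} (A P : Matrix (Fin n) (Fin n) ℂ)
    (hRe : ((1 / 2 : ℂ) • (A + Aᴴ)).PosDef) (hP : P.PosDef)
    (α : ℝ) (hα : 0 < α) (b : Fin n → ℂ)
    (x xh : ℕ → Fin n → ℂ)
    (hhalf : ∀ k : ℕ, ((α : ℂ) • P + (1 / 2 : ℂ) • (A + Aᴴ)).mulVec (xh k) =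
      ((α : ℂ) • P - Complex.I • ((1 / (2 * Complex.I) : ℂ) • (A - Aᴴ))).mulVec (x k) + b)
    (hfull : ∀ k : ℕ, ((α : ℂ) • P + Complex.I • ((1 / (2 * Complex.I) : ℂ) • (A - Aᴴ))).mulVec
        (x (k + 1)) =
      ((α : ℂ) • P - (1 / 2 : ℂ) • (A + Aᴴ)).mulVec (xh k) + b)
    (xstar : Fin n → ℂ) (hstar : A.mulVec xstar = b) :
    (∃! y : Fin n → ℂ, A.mulVec y = b) ∧
      Filter.Tendsto x Filter.atTop (nhds xstar) := by
  have hK : Complex.I • ((1 / (2 * Complex.I) : ℂ) • (A - Aᴴ)) = (1 / 2 : ℂ) • (A - Aᴴ) := by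
    rw [smul_smul]; congr 1; field_simp
  have hA : (1 / 2 : ℂ) • (A + Aᴴ) + Complex.I • ((1 / (2 * Complex.I) : ℂ) • (A - Aᴴ)) = A := by
    rw [hK]; module
  have hK_skew : (Complex.I • ((1 / (2 * Complex.I) : ℂ) • (A - Aᴴ)))ᴴ =
      -(Complex.I • ((1 / (2 * Complex.I) : ℂ) • (A - Aᴴ))) := by
    rw [hK, conjTranspose_smul, conjTranspose_sub, conjTranspose_conjTranspose, ← neg_sub,
      smul_neg]
    norm_num
  have hconv (y : Fin n → ℂ) (hy : A *ᵥ y = b) : Tendsto x atTop (𝓝 y) :=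
    tendsto_phss (hP.smul (by exact_mod_cast hα)) hRe hK_skew (by rwa [hA]) hhalf hfull
  exact ⟨⟨xstar, hstar, fun y hy => tendsto_nhds_unique (hconv y hy) (hconv xstar hstar)⟩,
    hconv xstar hstar⟩
end

section
/- Let 0 < a ≤ b be real numbers and set κ = b/a and α* = √(ab). Then max(|(α* − a)/(α* + a)|, |(α* − b)/(α* + b)|) = (√κ − 1)/(√κ + 1), and for every α > 0 one has max(|(α − a)/(α + a)|, |(α − b)/(α + b)|) ≥ (√κ − 1)/(√κ + 1). -/
/-- Optimality of `α* = √(a b)`: for `0 < a ≤ b` and `κ = b / a`, the contraction bound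
`max (|(α - a)/(α + a)|, |(α - b)/(α + b)|)` attains the value `(√κ - 1)/(√κ + 1)` at
`α = α* = √(a b)`, and this value is a lower bound for every `α > 0`. -/
theorem stmt_6 (a b : ℝ) (ha : 0 < a) (hab : a ≤ b) :
    max (|(Real.sqrt (a * b) - a) / (Real.sqrt (a * b) + a)|)
        (|(Real.sqrt (a * b) - b) / (Real.sqrt (a * b) + b)|) =
      (Real.sqrt (b / a) - 1) / (Real.sqrt (b / a) + 1) ∧
    ∀ α : ℝ, 0 < α →
      (Real.sqrt (b / a) - 1) / (Real.sqrt (b / a) + 1) ≤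
        max (|(α - a) / (α + a)|) (|(α - b) / (α + b)|) := by
  have hb : 0 < b := lt_of_lt_of_le ha hab
  set s := Real.sqrt a with hsdef
  set t := Real.sqrt b with htdef
  have hs : 0 < s := Real.sqrt_pos.mpr ha
  have ht : 0 < t := Real.sqrt_pos.mpr hb
  have hst : s ≤ t := Real.sqrt_le_sqrt hab
  have has : a = s ^ 2 := (Real.sq_sqrt ha.le).symm
  have hbt : b = t ^ 2 := (Real.sq_sqrt hb.le).symm
  have hmul : Real.sqrt (a * b) = s * t := Real.sqrt_mul ha.le b
  have hdiv : Real.sqrt (b / a) = t / s := Real.sqrt_div' b ha.le ▸ rfl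
  have hts : 0 < t + s := by linarith
  have hrhs : (Real.sqrt (b / a) - 1) / (Real.sqrt (b / a) + 1) = (t - s) / (t + s) := by
    rw [hdiv]
    field_simp
  constructor
  · rw [hrhs, hmul, has, hbt]
    have h1 : (s * t - s ^ 2) / (s * t + s ^ 2) = (t - s) / (t + s) := by
      rw [div_eq_div_iff (by nlinarith) (by nlinarith)]; ring
    have h2 : (s * t - t ^ 2) / (s * t + t ^ 2) = -((t - s) / (t + s)) := by
      rw [neg_div' ]
      rw [div_eq_div_iff (by nlinarith) (by nlinarith)]; ring
    rw [h1, h2, abs_neg, abs_of_nonneg (div_nonneg (by linarith) hts.le), max_self]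
  · intro α hα
    rw [hrhs]
    rcases le_total (s * t) α with h | h
    · refine le_max_of_le_left (le_trans ?_ (le_abs_self _))
      rw [has, div_le_div_iff₀ hts (by nlinarith)]
      nlinarith
    · refine le_max_of_le_right (le_trans ?_ (neg_le_abs _))
      rw [hbt, ← neg_div, div_le_div_iff₀ hts (by nlinarith)]
      nlinarith
end

section
/- Let ĥ > 0, w ≥ 1/(ĥ·√(ĥ² + 2)), m ≥ 0, and let c₁, c₂, c₃ be real numbers with |c_r| ≤ m for r = 1, 2, 3. Define the 3×3 complex Hermitian matrices A¹ = i·[[0,−1,0],[1,0,0],[0,0,0]], A² = i·[[0,0,0],[0,0,−1],[0,1,0]], A³ = i·[[0,0,−1],[0,0,0],[1,0,0]], and R¹ = [[1+ĥ²,−1,0],[−1,1+ĥ²,0],[0,0,0]], R² = [[0,0,0],[0,1+ĥ²,−1],[0,−1,1+ĥ²]], R³ = [[1+ĥ²,0,−1],[0,0,0],[−1,0,1+ĥ²]]. Then ±(c₁A¹ + c₂A² + c₃A³) ≼ m·w·(R¹ + R² + R³) = m·w·[[2(1+ĥ²),−1,−1],[−1,2(1+ĥ²),−1],[−1,−1,2(1+ĥ²)]]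 in the Loewner order. -/
/-!
The matrix `m w (R¹ + R² + R³) ∓ (c₁ A¹ + c₂ A² + c₃ A³)` is the sum of three Hermitian matrices,
each supported on a principal `2 × 2` block `[[a, b], [b̄, a]]` with `a = m w (1 + t²)` and
`b = -m w ± c_r i`. Such a block is positive semidefinite as soon as `‖b‖ ≤ a`, and
`‖b‖² = (m w)² + c_r² ≤ (m w)² (1 + t²)²` because `(1 + t²)² - 1 = t² (t² + 2)` and
`c_r² ≤ m² ≤ (m w)² t² (t² + 2)`, the last step being the hypothesis on `w`, squared.
-/

open Matrix
open scoped ComplexOrder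

/-- The elementary skew-Hermitian `3 × 3` matrices appearing in the proof of Theorem 5.3. -/
noncomputable def elIm1 : Matrix (Fin 3) (Fin 3) ℂ := Complex.I • !![0, -1, 0; 1, 0, 0; 0, 0, 0]
noncomputable def elIm2 : Matrix (Fin 3) (Fin 3) ℂ := Complex.I • !![0, 0, 0; 0, 0, -1; 0, 1, 0]
noncomputable def elIm3 : Matrix (Fin 3) (Fin 3) ℂ := Complex.I • !![0, 0, -1; 0, 0, 0; 1, 0, 0]

/-- The stiffness-like elementary `3 × 3` matrices appearing in the proof of Theorem 5.3,
depending on the parameter `t` (playing the role of `ĥ`). -/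
noncomputable def elR1 (t : ℝ) : Matrix (Fin 3) (Fin 3) ℂ :=
  !![1 + (t : ℂ) ^ 2, -1, 0; -1, 1 + (t : ℂ) ^ 2, 0; 0, 0, 0]
noncomputable def elR2 (t : ℝ) : Matrix (Fin 3) (Fin 3) ℂ :=
  !![0, 0, 0; 0, 1 + (t : ℂ) ^ 2, -1; 0, -1, 1 + (t : ℂ) ^ 2]
noncomputable def elR3 (t : ℝ) : Matrix (Fin 3) (Fin 3) ℂ :=
  !![1 + (t : ℂ) ^ 2, 0, -1; 0, 0, 0; -1, 0, 1 + (t : ℂ) ^ 2]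

lemma add_two_mul_re_star_mul_mul_nonneg {a : ℝ} {b : ℂ} (hb : ‖b‖ ≤ a) (x y : ℂ) :
    0 ≤ a * (‖x‖ ^ 2 + ‖y‖ ^ 2) + 2 * (star x * b * y).re := by
  have hre : -(star x * b * y).re ≤ a * (‖x‖ * ‖y‖) :=
    calc -(star x * b * y).re ≤ ‖star x * b * y‖ := neg_le.1 (abs_le.1 (Complex.abs_re_le_norm _)).1
      _ = ‖b‖ * (‖x‖ * ‖y‖) := by simp only [norm_mul, norm_star]; ring
      _ ≤ a * (‖x‖ * ‖y‖) := by gcongr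
  have ha : 0 ≤ a := (norm_nonneg b).trans hb
  nlinarith [mul_nonneg ha (sq_nonneg (‖x‖ - ‖y‖))]

section PairBlock

variable {n : Type*} [DecidableEq n]

def pairBlock (i j : n) (a : ℝ) (b : ℂ) : Matrix n n ℂ :=
  single i i (a : ℂ) + single j j (a : ℂ) + single i j b + single j i (star b)

lemma star_dotProduct_pairBlock_mulVec [Fintype n] (i j : n) (a : ℝ) (b : ℂ) (x : n → ℂ) :
    star x ⬝ᵥ pairBlock i j a b *ᵥ x =
      ((a * (‖x i‖ ^ 2 + ‖x j‖ ^ 2) + 2 * (star (x i) * b * x j).re : ℝ) : ℂ) := by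
  have hsingle (k : n) (c : ℂ) : Function.update (0 : n → ℂ) k c = Pi.single k c := rfl
  have hconj : star (x j) * (star b * x i) = star (star (x i) * b * x j) := by
    simp only [star_mul', star_star]; ring
  have hre : _ = ((2 * _ : ℝ) : ℂ) := Complex.add_conj (star (x i) * b * x j)
  simp only [pairBlock, add_mulVec, single_mulVec, hsingle, dotProduct_add, dotProduct_single,
    Pi.star_apply, hconj]
  simp only [Complex.star_def] at hre ⊢
  push_cast at hre ⊢
  linear_combination (a : ℂ) * Complex.conj_mul' (x i) + (a : ℂ) * Complex.conj_mul' (x j) + hre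

lemma posSemidef_pairBlock [Fintype n] (i j : n) {a : ℝ} {b : ℂ} (hb : ‖b‖ ≤ a) :
    (pairBlock i j a b).PosSemidef := by
  refine .of_dotProduct_mulVec_nonneg ?_ fun x => ?_
  · simp only [pairBlock, IsHermitian, conjTranspose_add, conjTranspose_single, Complex.star_def,
      Complex.conj_ofReal, Complex.conj_conj]
    abel
  · rw [star_dotProduct_pairBlock_mulVec]
    exact_mod_cast add_two_mul_re_star_mul_mul_nonneg hb (x i) (x j)

end PairBlock

lemma one_le_sq_mul_of_inv_le {t w : ℝ} (ht : 0 < t) (hw : 1 / (t * √(t ^ 2 + 2)) ≤ w) :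
    1 ≤ w ^ 2 * (t ^ 2 * (t ^ 2 + 2)) := by
  have hpos : 0 < t * √(t ^ 2 + 2) := by positivity
  have hw₁ : 1 ≤ w * (t * √(t ^ 2 + 2)) := by rwa [div_le_iff₀ hpos] at hw
  calc (1 : ℝ) ≤ (w * (t * √(t ^ 2 + 2))) ^ 2 := one_le_pow₀ hw₁
    _ = w ^ 2 * (t ^ 2 * (t ^ 2 + 2)) := by rw [mul_pow, mul_pow, Real.sq_sqrt (by positivity)]

lemma norm_neg_add_mul_I_le {k t c : ℝ} (hk : 0 ≤ k) (hc : c ^ 2 ≤ k ^ 2 * (t ^ 2 * (t ^ 2 + 2))) :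
    ‖((-k : ℝ) : ℂ) + c * Complex.I‖ ≤ k * (1 + t ^ 2) := by
  rw [Complex.norm_add_mul_I, Real.sqrt_le_iff]
  exact ⟨by positivity, by nlinarith⟩

lemma smul_elR_sub_elIm_eq_sum_pairBlock (k t c₁ c₂ c₃ : ℝ) :
    (k : ℂ) • (elR1 t + elR2 t + elR3 t) - ((c₁ : ℂ) • elIm1 + (c₂ : ℂ) • elIm2 + (c₃ : ℂ) • elIm3) =
      pairBlock 0 1 (k * (1 + t ^ 2)) ((-k : ℝ) + c₁ * Complex.I) +
      pairBlock 1 2 (k * (1 + t ^ 2)) ((-k : ℝ) + c₂ * Complex.I) +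
      pairBlock 0 2 (k * (1 + t ^ 2)) ((-k : ℝ) + c₃ * Complex.I) := by
  ext i j
  fin_cases i <;> fin_cases j <;>
    simp [pairBlock, elR1, elR2, elR3, elIm1, elIm2, elIm3] <;> ring

lemma posSemidef_smul_elR_sub_elIm {k t c₁ c₂ c₃ : ℝ} (hk : 0 ≤ k)
    (hc₁ : c₁ ^ 2 ≤ k ^ 2 * (t ^ 2 * (t ^ 2 + 2))) (hc₂ : c₂ ^ 2 ≤ k ^ 2 * (t ^ 2 * (t ^ 2 + 2)))
    (hc₃ : c₃ ^ 2 ≤ k ^ 2 * (t ^ 2 * (t ^ 2 + 2))) :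
    ((k : ℂ) • (elR1 t + elR2 t + elR3 t) -
      ((c₁ : ℂ) • elIm1 + (c₂ : ℂ) • elIm2 + (c₃ : ℂ) • elIm3)).PosSemidef := by
  rw [smul_elR_sub_elIm_eq_sum_pairBlock]
  exact ((posSemidef_pairBlock _ _ (norm_neg_add_mul_I_le hk hc₁)).add
    (posSemidef_pairBlock _ _ (norm_neg_add_mul_I_le hk hc₂))).add
    (posSemidef_pairBlock _ _ (norm_neg_add_mul_I_le hk hc₃))

lemma elR1_add_elR2_add_elR3 (t : ℝ) :
    elR1 t + elR2 t + elR3 t =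
      !![2 * (1 + (t : ℂ) ^ 2), -1, -1;
         -1, 2 * (1 + (t : ℂ) ^ 2), -1;
         -1, -1, 2 * (1 + (t : ℂ) ^ 2)] := by
  ext i j
  fin_cases i <;> fin_cases j <;> simp [elR1, elR2, elR3] <;> ring

/-- Majorization of the imaginary part of the elementary finite element matrix
(proof of Theorem 5.3): if `t > 0`, `w ≥ 1/(t √(t² + 2))`, `m ≥ 0` and `|c_r| ≤ m` for
`r = 1, 2, 3`, then `±(c₁ A¹ + c₂ A² + c₃ A³) ≼ m w (R¹ + R² + R³)` in the Loewner order,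
and `R¹ + R² + R³` is the matrix with diagonal entries `2(1 + t²)` and off-diagonal
entries `-1`. -/
theorem stmt_14 (t w m c₁ c₂ c₃ : ℝ) (ht : 0 < t)
    (hw : 1 / (t * Real.sqrt (t ^ 2 + 2)) ≤ w) (hm : 0 ≤ m)
    (h1 : |c₁| ≤ m) (h2 : |c₂| ≤ m) (h3 : |c₃| ≤ m) :
    elR1 t + elR2 t + elR3 t =
      !![2 * (1 + (t : ℂ) ^ 2), -1, -1;
         -1, 2 * (1 + (t : ℂ) ^ 2), -1;
         -1, -1, 2 * (1 + (t : ℂ) ^ 2)] ∧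
    (((m * w : ℝ) : ℂ) • (elR1 t + elR2 t + elR3 t) -
      ((c₁ : ℂ) • elIm1 + (c₂ : ℂ) • elIm2 + (c₃ : ℂ) • elIm3)).PosSemidef ∧
    (((m * w : ℝ) : ℂ) • (elR1 t + elR2 t + elR3 t) +
      ((c₁ : ℂ) • elIm1 + (c₂ : ℂ) • elIm2 + (c₃ : ℂ) • elIm3)).PosSemidef := by
  have hk : 0 ≤ m * w := mul_nonneg hm ((by positivity : (0 : ℝ) ≤ 1 / (t * √(t ^ 2 + 2))).trans hw)
  have hc {c : ℝ} (hc : |c| ≤ m) : c ^ 2 ≤ (m * w) ^ 2 * (t ^ 2 * (t ^ 2 + 2)) :=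
    calc c ^ 2 ≤ m ^ 2 := by simpa only [sq_abs] using pow_le_pow_left₀ (abs_nonneg c) hc 2
      _ ≤ m ^ 2 * (w ^ 2 * (t ^ 2 * (t ^ 2 + 2))) :=
        le_mul_of_one_le_right (sq_nonneg m) (one_le_sq_mul_of_inv_le ht hw)
      _ = (m * w) ^ 2 * (t ^ 2 * (t ^ 2 + 2)) := by ring
  refine ⟨elR1_add_elR2_add_elR3 t, posSemidef_smul_elR_sub_elIm hk (hc h1) (hc h2) (hc h3), ?_⟩
  have hneg := posSemidef_smul_elR_sub_elIm (c₁ := -c₁) (c₂ := -c₂) (c₃ := -c₃) hk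
    (hc (by rwa [abs_neg])) (hc (by rwa [abs_neg])) (hc (by rwa [abs_neg]))
  simpa only [Complex.ofReal_neg, neg_smul, ← neg_add, sub_neg_eq_add] using hneg
end
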